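/- There exist probability distributions p, q on Z_4 for which R is strictly superadditive: with p = (13/64, 18/64, 19/64, 14/64) and q = (7/20, 3/20, 6/20, 4/20), one has max_n |(p*q)^_n| < (max_n |p̂_n|)·(max_n |q̂_n|), hence R(p*q) > R(p) + R(q). -/

import Mathlib

/-!
The discrete Fourier transform on `ℤ/4` turns convolution into pointwise multiplication, so
`max_n |(p*q)^_n| = max_n |p̂_n| |q̂_n|`. For real `p` one has `|p̂_3| = |p̂_1|`. For the given `p`,
`p̂_2 = 0` and `|p̂_1| > 0`, whereas for the given `q` the largest coefficient is `|q̂_2| = 3/10 > |q̂_1|`.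
The two maxima sit at different frequencies, so `max_n |p̂_n q̂_n| = |p̂_1| |q̂_1| < |p̂_1| |q̂_2|`,
and applying the decreasing map `x ↦ -2 log x` gives the statement about `R`.
-/

/-- The convolution of two distributions over `Z_4`. -/
noncomputable def convZ4 (p q : Fin 4 → ℝ) (k : Fin 4) : ℝ :=
  ∑ k₁ : Fin 4, ∑ k₂ : Fin 4,
    if (k₁.val + k₂.val) % 4 = k.val then p k₁ * q k₂ else 0

/-- The Fourier coefficient `p̂_n = ∑_{m=0}^{3} e^{2πi n m/4} p_m` on `Z_4`. -/
noncomputable def dft4 (p : Fin 4 → ℝ) (n : ℕ) : ℂ :=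
  ∑ m : Fin 4,
    Complex.exp (2 * Real.pi * Complex.I * (n : ℂ) * (m.val : ℂ) / (4 : ℂ)) * (p m : ℂ)

/-- `max_{n ∈ {1,2,3}} |p̂_n|` on `Z_4`. -/
noncomputable def rMax4 (p : Fin 4 → ℝ) : ℝ :=
  max (‖dft4 p 1‖) (max (‖dft4 p 2‖) (‖dft4 p 3‖))

/-- `R(p) = -2 log (max_{1≤n≤3} |p̂_n|)` on `Z_4`. -/
noncomputable def rateZ4 (p : Fin 4 → ℝ) : ℝ :=
  -2 * Real.log (rMax4 p)

open Complex ComplexConjugate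

lemma exp_two_pi_I_mul_div_four (n m : ℕ) :
    exp (2 * Real.pi * I * n * m / 4) = I ^ (n * m) := by
  have h : (2 * Real.pi * I * n * m / 4) = (n * m : ℕ) * (Real.pi / 2 * I) := by
    push_cast
    ring
  rw [h, exp_nat_mul, exp_mul_I, cos_pi_div_two, sin_pi_div_two]
  simp

lemma dft4_eq_sum_I_pow (p : Fin 4 → ℝ) (n : ℕ) :
    dft4 p n = ∑ m : Fin 4, I ^ (n * m.val) * p m := by
  simp only [dft4, exp_two_pi_I_mul_div_four]

lemma convZ4_eq_sum_ite (p q : Fin 4 → ℝ) (k : Fin 4) :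
    convZ4 p q k = ∑ k₁ : Fin 4, ∑ k₂ : Fin 4, if k₁ + k₂ = k then p k₁ * q k₂ else 0 := by
  refine Finset.sum_congr rfl fun k₁ _ => Finset.sum_congr rfl fun k₂ _ => ?_
  exact if_congr (by rw [Fin.ext_iff, Fin.val_add]) rfl rfl

lemma dft4_convZ4 (p q : Fin 4 → ℝ) (n : ℕ) :
    dft4 (convZ4 p q) n = dft4 p n * dft4 q n := by
  have hI : (I ^ n) ^ 4 = 1 := by rw [← pow_mul, mul_comm, pow_mul, I_pow_four, one_pow]
  calc dft4 (convZ4 p q) n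
      = ∑ k₁ : Fin 4, ∑ k₂ : Fin 4, I ^ (n * (k₁ + k₂).val) * (p k₁ * q k₂) := by
        simp only [dft4_eq_sum_I_pow, convZ4_eq_sum_ite, ofReal_sum, Finset.mul_sum]
        rw [Finset.sum_comm]
        refine Finset.sum_congr rfl fun k₁ _ => ?_
        rw [Finset.sum_comm]
        refine Finset.sum_congr rfl fun k₂ _ => ?_
        simp only [apply_ite ((↑) : ℝ → ℂ), ofReal_zero, ofReal_mul, mul_ite, mul_zero,
          Finset.sum_ite_eq, Finset.mem_univ, if_true]
    _ = dft4 p n * dft4 q n := by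
        simp only [Fin.val_add, pow_mul, ← pow_eq_pow_mod _ hI, dft4_eq_sum_I_pow,
          Finset.sum_mul_sum]
        refine Finset.sum_congr rfl fun k₁ _ => Finset.sum_congr rfl fun k₂ _ => ?_
        ring

lemma norm_dft4_three (p : Fin 4 → ℝ) : ‖dft4 p 3‖ = ‖dft4 p 1‖ := by
  have h : dft4 p 3 = conj (dft4 p 1) := by
    simp only [dft4_eq_sum_I_pow, map_sum, map_mul, map_pow, conj_I, conj_ofReal, one_mul, pow_mul]
    norm_num [pow_succ]
  rw [h, norm_conj]

lemma norm_dft4_one (p : Fin 4 → ℝ) :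
    ‖dft4 p 1‖ = √((p 0 - p 2) ^ 2 + (p 1 - p 3) ^ 2) := by
  have h : dft4 p 1 = ((p 0 - p 2 : ℝ) : ℂ) + ((p 1 - p 3 : ℝ) : ℂ) * I := by
    simp [dft4_eq_sum_I_pow, Fin.sum_univ_four, pow_succ]
    ring
  rw [h, norm_add_mul_I]

lemma dft4_two (p : Fin 4 → ℝ) : dft4 p 2 = (p 0 - p 1 + p 2 - p 3 : ℝ) := by
  simp [dft4_eq_sum_I_pow, Fin.sum_univ_four, pow_succ]
  ring

lemma rMax4_eq_norm_dft4_one_of_dft4_two_eq_zero {p : Fin 4 → ℝ} (h : dft4 p 2 = 0) :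
    rMax4 p = ‖dft4 p 1‖ := by
  simp [rMax4, h, norm_dft4_three]

lemma rMax4_eq_norm_dft4_two_of_le {p : Fin 4 → ℝ} (h : ‖dft4 p 1‖ ≤ ‖dft4 p 2‖) :
    rMax4 p = ‖dft4 p 2‖ := by
  rw [rMax4, norm_dft4_three, max_eq_left h, max_eq_right h]

lemma rMax4_convZ4_of_dft4_two_eq_zero {p : Fin 4 → ℝ} (h : dft4 p 2 = 0) (q : Fin 4 → ℝ) :
    rMax4 (convZ4 p q) = ‖dft4 p 1‖ * ‖dft4 q 1‖ := by
  simpa [rMax4, dft4_convZ4, h, norm_dft4_three] using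
    mul_nonneg (norm_nonneg (dft4 p 1)) (norm_nonneg (dft4 q 1))

lemma rMax4_convZ4_lt_mul {p q : Fin 4 → ℝ} (hp₂ : dft4 p 2 = 0) (hp₁ : 0 < ‖dft4 p 1‖)
    (hq : ‖dft4 q 1‖ < ‖dft4 q 2‖) : rMax4 (convZ4 p q) < rMax4 p * rMax4 q := by
  rw [rMax4_convZ4_of_dft4_two_eq_zero hp₂, rMax4_eq_norm_dft4_one_of_dft4_two_eq_zero hp₂,
    rMax4_eq_norm_dft4_two_of_le hq.le]
  exact mul_lt_mul_of_pos_left hq hp₁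

lemma rateZ4_add_lt_of_rMax4_lt {p q r : Fin 4 → ℝ} (hr : 0 < rMax4 r)
    (h : rMax4 r < rMax4 p * rMax4 q) : rateZ4 p + rateZ4 q < rateZ4 r := by
  have hpq : rMax4 p * rMax4 q ≠ 0 := (hr.trans h).ne'
  have hlog := Real.log_lt_log hr h
  rw [Real.log_mul (left_ne_zero_of_mul hpq) (right_ne_zero_of_mul hpq)] at hlog
  simp only [rateZ4]
  linarith

/-- For the explicit distributions `p = (13/64, 18/64, 19/64, 14/64)` and
`q = (7/20, 3/20, 6/20, 4/20)` on `Z_4`, one has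
`max_n |(p*q)^_n| < (max_n |p̂_n|) (max_n |q̂_n|)`, hence `R(p*q) > R(p) + R(q)`:
`R` is strictly superadditive. -/
theorem rateZ4_strictly_superadditive :
    let p : Fin 4 → ℝ := ![13/64, 18/64, 19/64, 14/64]
    let q : Fin 4 → ℝ := ![7/20, 3/20, 6/20, 4/20]
    rMax4 (convZ4 p q) < rMax4 p * rMax4 q ∧
    rateZ4 (convZ4 p q) > rateZ4 p + rateZ4 q := by
  intro p q
  have hp₂ : dft4 p 2 = 0 := by
    norm_num [dft4_two, p, Matrix.cons_val_two, Matrix.cons_val_three]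
  have hp₁ : ‖dft4 p 1‖ = √(13 / 1024) := by
    norm_num [norm_dft4_one, p, Matrix.cons_val_two, Matrix.cons_val_three]
  have hq₁ : ‖dft4 q 1‖ = √(1 / 200) := by
    norm_num [norm_dft4_one, q, Matrix.cons_val_two, Matrix.cons_val_three]
  have hq₂ : ‖dft4 q 2‖ = 3 / 10 := by
    norm_num [dft4_two, q, Matrix.cons_val_two, Matrix.cons_val_three]
  have hq : ‖dft4 q 1‖ < ‖dft4 q 2‖ := by
    rw [hq₁, hq₂, Real.sqrt_lt' (by norm_num)]
    norm_num
  have hmax := rMax4_convZ4_lt_mul hp₂ (by rw [hp₁]; positivity) hq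
  refine ⟨hmax, rateZ4_add_lt_of_rMax4_lt ?_ hmax⟩
  rw [rMax4_convZ4_of_dft4_two_eq_zero hp₂, hp₁, hq₁]
  positivity
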